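/- If f : X → X is a homeomorphism of a compact metric space satisfying the L-shadowing property, then X = ⋃_{x ∈ CR(f)} W^s(x); that is, every point of X belongs to the stable set W^s(x) of some chain-recurrent point x. -/
import Mathlib


open Metric Filter

/-- The `n`-th iterate (for `n : ℤ`) of a homeomorphism `f`. -/
def zIter {X : Type*} [TopologicalSpace X] (f : X ≃ₜ X) (n : ℤ) : X → X :=
  fun y => (f.toEquiv ^ n) y

/-- The L-shadowing property for a homeomorphism `f`. Convergence as `|k| → ∞` is expressed
using the cofinite filter on `ℤ`. -/
def LShadowing {X : Type*} [MetricSpace X] (f : X ≃ₜ X) : Prop :=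
  ∀ ε > (0 : ℝ), ∃ δ > (0 : ℝ), ∀ x : ℤ → X,
    (∀ k : ℤ, dist (f (x k)) (x (k + 1)) ≤ δ) →
    Tendsto (fun k : ℤ => dist (f (x k)) (x (k + 1))) cofinite (nhds 0) →
    ∃ z : X, (∀ k : ℤ, dist (zIter f k z) (x k) ≤ ε) ∧
      Tendsto (fun k : ℤ => dist (zIter f k z) (x k)) cofinite (nhds 0)

/-- `x` is a chain-recurrent point of `f`: for every `ε > 0` there is a non-trivial finite
`ε`-pseudo orbit starting and ending at `x`. -/
def ChainRecurrentPt {X : Type*} [MetricSpace X] (f : X → X) (x : X) : Prop :=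
  ∀ ε > (0 : ℝ), ∃ m : ℕ, 1 ≤ m ∧ ∃ y : ℕ → X, y 0 = x ∧ y m = x ∧
    ∀ i < m, dist (f (y i)) (y (i + 1)) < ε

/-- The stable set of `x`: `W^s(x) = {y : d(f^k(y), f^k(x)) → 0 as k → ∞}`. -/
def stableSet {X : Type*} [MetricSpace X] (f : X → X) (x : X) : Set X :=
  {y : X | Tendsto (fun k : ℕ => dist (f^[k] y) (f^[k] x)) atTop (nhds 0)}

lemma zIter_add {X : Type*} [TopologicalSpace X] (f : X ≃ₜ X) (a b : ℤ) (w : X) :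
    zIter f a (zIter f b w) = zIter f (a + b) w := by
  simp [zIter, zpow_add, Equiv.Perm.mul_apply]

lemma f_zIter {X : Type*} [TopologicalSpace X] (f : X ≃ₜ X) (k : ℤ) (w : X) :
    f (zIter f k w) = zIter f (k + 1) w := by
  have h := zIter_add f 1 k w
  have h1 : zIter f 1 (zIter f k w) = f (zIter f k w) := by simp [zIter]
  rw [h1] at h
  rw [h, add_comm]

lemma zIter_natCast {X : Type*} [TopologicalSpace X] (f : X ≃ₜ X) (k : ℕ) (w : X) :
    zIter f (k : ℤ) w = f^[k] w := by
  induction k with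
  | zero => simp [zIter]
  | succ k ih =>
      rw [Function.iterate_succ_apply', ← ih, f_zIter]
      norm_num

lemma Jfun_ex (n : ℕ → ℕ) (hn : ∀ j, j + 1 ≤ n j) (k : ℤ) :
    ∃ j : ℕ, (n 1 : ℤ) - k ≤ (n (j + 1) : ℤ) := by
  refine ⟨((n 1 : ℤ) - k).toNat, ?_⟩
  have h1 := hn (((n 1 : ℤ) - k).toNat + 1)
  have h2 := Int.self_le_toNat ((n 1 : ℤ) - k)
  omega

def Jfun (n : ℕ → ℕ) (hn : ∀ j, j + 1 ≤ n j) (k : ℤ) : ℕ := Nat.find (Jfun_ex n hn k)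

lemma Jfun_spec (n : ℕ → ℕ) (hn : ∀ j, j + 1 ≤ n j) (k : ℤ) :
    (n 1 : ℤ) - k ≤ (n (Jfun n hn k + 1) : ℤ) := Nat.find_spec (Jfun_ex n hn k)

lemma Jfun_le (n : ℕ → ℕ) (hn : ∀ j, j + 1 ≤ n j) (k : ℤ) {j : ℕ}
    (h : (n 1 : ℤ) - k ≤ (n (j + 1) : ℤ)) : Jfun n hn k ≤ j := Nat.find_le h

lemma Jfun_lt (n : ℕ → ℕ) (hn : ∀ j, j + 1 ≤ n j) (hmono : StrictMono n)
    {k : ℤ} (hk : k < 0) : (n (Jfun n hn k) : ℤ) < (n 1 : ℤ) - k := by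
  rcases Nat.eq_zero_or_pos (Jfun n hn k) with h0 | hpos
  · rw [h0]
    have := hmono (show 0 < 1 by norm_num)
    omega
  · have hmin := Nat.find_min (Jfun_ex n hn k) (m := Jfun n hn k - 1) (Nat.sub_lt hpos one_pos)
    have heq : Jfun n hn k - 1 + 1 = Jfun n hn k := by omega
    rw [heq] at hmin
    omega

lemma Jfun_uniq (n : ℕ → ℕ) (hn : ∀ j, j + 1 ≤ n j) (hmono : StrictMono n)
    (k : ℤ) {j : ℕ} (h1 : (n j : ℤ) < (n 1 : ℤ) - k) (h2 : (n 1 : ℤ) - k ≤ (n (j + 1) : ℤ)) :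
    Jfun n hn k = j := by
  have hle : Jfun n hn k ≤ j := Jfun_le n hn k h2
  have hsp := Jfun_spec n hn k
  have : (n j : ℤ) < (n (Jfun n hn k + 1) : ℤ) := by omega
  have : n j < n (Jfun n hn k + 1) := by exact_mod_cast this
  have := hmono.lt_iff_lt.mp this
  omega

def Efun (n : ℕ → ℕ) (hn : ∀ j, j + 1 ≤ n j) (k : ℤ) : ℤ :=
  if 0 ≤ k then k + (n 0 : ℤ)
  else k + (n (Jfun n hn k + 1) : ℤ) - (n 1 : ℤ) + (n (Jfun n hn k) : ℤ)

lemma Efun_nonneg (n : ℕ → ℕ) (hn : ∀ j, j + 1 ≤ n j) {k : ℤ} (h : 0 ≤ k) :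
    Efun n hn k = k + (n 0 : ℤ) := if_pos h

lemma Efun_neg (n : ℕ → ℕ) (hn : ∀ j, j + 1 ≤ n j) {k : ℤ} (h : k < 0) :
    Efun n hn k = k + (n (Jfun n hn k + 1) : ℤ) - (n 1 : ℤ) + (n (Jfun n hn k) : ℤ) :=
  if_neg (by omega)

lemma Efun_err (n : ℕ → ℕ) (hn : ∀ j, j + 1 ≤ n j) (hmono : StrictMono n) (k : ℤ) :
    Efun n hn (k + 1) = Efun n hn k + 1 ∨
    (k < 0 ∧ 1 ≤ Jfun n hn k ∧ Efun n hn k + 1 = (n (Jfun n hn k + 1) : ℤ) ∧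
      Efun n hn (k + 1) = (n (Jfun n hn k - 1) : ℤ)) := by
  by_cases hk : 0 ≤ k
  · left
    rw [Efun_nonneg n hn hk, Efun_nonneg n hn (by omega)]
    ring
  · push_neg at hk
    have hsp := Jfun_spec n hn k
    have hlt := Jfun_lt n hn hmono hk
    by_cases hb : (n 1 : ℤ) - k = (n (Jfun n hn k) : ℤ) + 1
    · right
      have h01 : n 0 < n 1 := hmono one_pos
      have hj1 : 1 ≤ Jfun n hn k := by
        by_contra h
        push_neg at h
        have h0 : Jfun n hn k = 0 := by omega
        rw [h0] at hb
        omega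
      refine ⟨hk, hj1, ?_, ?_⟩
      · rw [Efun_neg n hn hk]; omega
      · by_cases hk1 : k + 1 < 0
        · have hstep : n (Jfun n hn k - 1) < n (Jfun n hn k) := hmono (by omega)
          have heq : Jfun n hn k - 1 + 1 = Jfun n hn k := by omega
          have hJ1 : Jfun n hn (k + 1) = Jfun n hn k - 1 := by
            apply Jfun_uniq n hn hmono
            · omega
            · rw [heq]; omega
          rw [Efun_neg n hn hk1, hJ1, heq]
          omega
        · have hk0 : k + 1 = 0 := by omega
          have hjn : n (Jfun n hn k) = n 1 := by omega
          have hj1' : Jfun n hn k = 1 := hmono.injective hjn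
          rw [Efun_nonneg n hn (by omega), hk0, hj1']
          norm_num
    · left
      by_cases hk1 : k + 1 < 0
      · have hJ1 : Jfun n hn (k + 1) = Jfun n hn k :=
          Jfun_uniq n hn hmono _ (by omega) (by omega)
        rw [Efun_neg n hn hk1, Efun_neg n hn hk, hJ1]
        ring
      · exfalso
        have hk0 : k = -1 := by omega
        have hnj : n (Jfun n hn k) < n 1 := by omega
        have hj0 : Jfun n hn k < 1 := hmono.lt_iff_lt.mp hnj
        have hj00 : Jfun n hn k = 0 := by omega
        rw [hj00] at hsp
        norm_num at hsp
        omega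

/-- If a homeomorphism `f` of a compact metric space satisfies the L-shadowing property,
then every point of `X` lies in the stable set of some chain-recurrent point. -/
theorem lShadowing_stable_sets_of_chain_recurrent_cover {X : Type*} [MetricSpace X]
    [CompactSpace X] (f : X ≃ₜ X) (hL : LShadowing f) :
    ∀ z : X, ∃ x : X, ChainRecurrentPt (⇑f) x ∧ z ∈ stableSet (⇑f) x := by
  intro z
  obtain ⟨δ, hδ, hshad⟩ := hL 1 one_pos
  obtain ⟨p, -, φ, hφ, hφt⟩ :=
    IsCompact.tendsto_subseq (x := fun n => f^[n] z) isCompact_univ fun n => Set.mem_univ _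
  have htd : Tendsto (fun j => dist (f^[φ j] z) p) atTop (nhds 0) := by
    have := hφt.dist (tendsto_const_nhds (x := p) (f := atTop))
    simpa using this
  obtain ⟨j0, hj0⟩ := eventually_atTop.1 (htd.eventually (gt_mem_nhds (half_pos hδ)))
  set n : ℕ → ℕ := fun j => φ (j + (j0 + 1)) with hndef
  have hnmono : StrictMono n := fun a b h => hφ (by omega)
  have hn : ∀ j, j + 1 ≤ n j := by
    intro j
    have h1 : j + (j0 + 1) ≤ φ (j + (j0 + 1)) := hφ.le_apply
    show j + 1 ≤ φ (j + (j0 + 1))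
    omega
  set d : ℕ → ℝ := fun j => dist (f^[n j] z) p with hddef
  have hdδ : ∀ j, d j ≤ δ / 2 := fun j => (hj0 (j + (j0 + 1)) (by omega)).le
  have hd0 : Tendsto d atTop (nhds 0) := htd.comp (tendsto_add_atTop_nat (j0 + 1))
  set x : ℤ → X := fun k => zIter f (Efun n hn k) z with hxdef
  have herr : ∀ k : ℤ, dist (f (x k)) (x (k + 1)) = 0 ∨
      (k < 0 ∧ 1 ≤ Jfun n hn k ∧
        dist (f (x k)) (x (k + 1)) ≤ d (Jfun n hn k + 1) + d (Jfun n hn k - 1)) := by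
    intro k
    rcases Efun_err n hn hnmono k with h | ⟨h1, h2, h3, h4⟩
    · left
      simp only [hxdef]
      rw [f_zIter, ← h, dist_self]
    · right
      refine ⟨h1, h2, ?_⟩
      simp only [hxdef]
      rw [f_zIter, h3, h4, zIter_natCast, zIter_natCast]
      calc dist (f^[n (Jfun n hn k + 1)] z) (f^[n (Jfun n hn k - 1)] z)
          ≤ dist (f^[n (Jfun n hn k + 1)] z) p + dist (f^[n (Jfun n hn k - 1)] z) p :=
            dist_triangle_right _ _ _
        _ = d (Jfun n hn k + 1) + d (Jfun n hn k - 1) := by rw [hddef]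
  have herrδ : ∀ k : ℤ, dist (f (x k)) (x (k + 1)) ≤ δ := by
    intro k
    rcases herr k with h | ⟨-, -, h⟩
    · rw [h]; exact hδ.le
    · have q1 := hdδ (Jfun n hn k + 1)
      have q2 := hdδ (Jfun n hn k - 1)
      linarith
  have herrt : Tendsto (fun k : ℤ => dist (f (x k)) (x (k + 1))) cofinite (nhds 0) := by
    rw [Metric.tendsto_nhds]
    intro ε hε
    rw [eventually_cofinite]
    obtain ⟨N, hN⟩ := eventually_atTop.1 (hd0.eventually (gt_mem_nhds (half_pos hε)))
    apply Set.Finite.subset (Set.finite_Icc ((n 1 : ℤ) - (n (N + 1) : ℤ)) 0)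
    intro k hk
    simp only [Set.mem_setOf_eq, not_lt] at hk
    rw [Real.dist_0_eq_abs, abs_of_nonneg dist_nonneg] at hk
    rcases herr k with h | ⟨hkneg, hJ1, hle⟩
    · rw [h] at hk; linarith
    · have hJN : Jfun n hn k - 1 < N := by
        by_contra hcon
        push_neg at hcon
        have q1 := hN _ hcon
        have q2 := hN (Jfun n hn k + 1) (by omega)
        linarith
      have hsp := Jfun_spec n hn k
      have hmn : (n (Jfun n hn k + 1) : ℤ) ≤ (n (N + 1) : ℤ) :=
        Nat.cast_le.mpr (hnmono.monotone (by omega))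
      exact Set.mem_Icc.mpr ⟨by omega, by omega⟩
  obtain ⟨z', -, hz2⟩ := hshad x herrδ herrt
  have hcoe : ∀ k : ℤ, 0 ≤ k → x k = zIter f (k + (n 0 : ℤ)) z := by
    intro k hk
    simp only [hxdef]
    rw [Efun_nonneg n hn hk]
  have hmapfor : Tendsto (fun j : ℕ => (n j : ℤ) - (n 0 : ℤ)) atTop cofinite := by
    have h1 : Tendsto (fun j : ℕ => (n j : ℤ)) atTop atTop :=
      tendsto_natCast_atTop_atTop.comp hnmono.tendsto_atTop
    have h2 := tendsto_atTop_add_const_right atTop (-(n 0 : ℤ)) h1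
    rw [Int.cofinite_eq]
    exact Tendsto.mono_right (h2.congr fun j => by ring) le_sup_right
  have hfor : Tendsto (fun j : ℕ => dist (zIter f ((n j : ℤ) - (n 0 : ℤ)) z') p)
      atTop (nhds 0) := by
    apply squeeze_zero (fun j => dist_nonneg)
      (g := fun j => dist (zIter f ((n j : ℤ) - (n 0 : ℤ)) z') (x ((n j : ℤ) - (n 0 : ℤ))) + d j)
    · intro j
      have h0j : (0 : ℤ) ≤ (n j : ℤ) - (n 0 : ℤ) := by
        have := hnmono.monotone (Nat.zero_le j)
        omega
      have hxv : x ((n j : ℤ) - (n 0 : ℤ)) = f^[n j] z := by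
        rw [hcoe _ h0j, sub_add_cancel, zIter_natCast]
      calc dist (zIter f ((n j : ℤ) - (n 0 : ℤ)) z') p
          ≤ dist (zIter f ((n j : ℤ) - (n 0 : ℤ)) z') (x ((n j : ℤ) - (n 0 : ℤ)))
            + dist (x ((n j : ℤ) - (n 0 : ℤ))) p := dist_triangle _ _ _
        _ = _ + d j := by rw [hxv, hddef]
    · have := (hz2.comp hmapfor).add hd0
      simpa using this
  have hmapback : Tendsto (fun j : ℕ => (n 1 : ℤ) - (n (j + 1) : ℤ)) atTop cofinite := by
    have h1 : Tendsto (fun j : ℕ => (n (j + 1) : ℤ)) atTop atTop :=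
      tendsto_natCast_atTop_atTop.comp (hnmono.tendsto_atTop.comp (tendsto_add_atTop_nat 1))
    have h1n : Tendsto (fun j : ℕ => -(n (j + 1) : ℤ)) atTop atBot :=
      tendsto_neg_atTop_atBot.comp h1
    have h2 : Tendsto (fun j : ℕ => (n 1 : ℤ) - (n (j + 1) : ℤ)) atTop atBot :=
      (tendsto_atBot_add_const_left atTop ((n 1 : ℕ) : ℤ) h1n).congr fun j => by ring
    rw [Int.cofinite_eq]
    exact Tendsto.mono_right h2 le_sup_left
  have hback : Tendsto (fun j : ℕ => dist (zIter f ((n 1 : ℤ) - (n (j + 1) : ℤ)) z') p)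
      atTop (nhds 0) := by
    apply squeeze_zero' (Eventually.of_forall fun j => dist_nonneg)
      (g := fun j => dist (zIter f ((n 1 : ℤ) - (n (j + 1) : ℤ)) z')
        (x ((n 1 : ℤ) - (n (j + 1) : ℤ))) + d j)
    · filter_upwards [eventually_ge_atTop 1] with j hj
      have hk : (n 1 : ℤ) - (n (j + 1) : ℤ) < 0 := by
        have : n 1 < n (j + 1) := hnmono (by omega)
        omega
      have hJ : Jfun n hn ((n 1 : ℤ) - (n (j + 1) : ℤ)) = j := by
        apply Jfun_uniq n hn hnmono
        · have : n j < n (j + 1) := hnmono (by omega)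
          omega
        · omega
      have hxv : x ((n 1 : ℤ) - (n (j + 1) : ℤ)) = f^[n j] z := by
        simp only [hxdef]
        rw [Efun_neg n hn hk, hJ]
        have he : (n 1 : ℤ) - (n (j + 1) : ℤ) + (n (j + 1) : ℤ) - (n 1 : ℤ) + (n j : ℤ)
            = ((n j : ℕ) : ℤ) := by ring
        rw [he, zIter_natCast]
      calc dist (zIter f ((n 1 : ℤ) - (n (j + 1) : ℤ)) z') p
          ≤ dist (zIter f ((n 1 : ℤ) - (n (j + 1) : ℤ)) z') (x ((n 1 : ℤ) - (n (j + 1) : ℤ)))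
            + dist (x ((n 1 : ℤ) - (n (j + 1) : ℤ))) p := dist_triangle _ _ _
        _ = _ + d j := by rw [hxv, hddef]
    · have := (hz2.comp hmapback).add hd0
      simpa using this
  refine ⟨zIter f (-(n 0 : ℤ)) z', ?_, ?_⟩
  · -- chain recurrence
    intro ε hε
    have he1 := hfor.eventually (gt_mem_nhds (half_pos hε))
    have he2 := hback.eventually (gt_mem_nhds (half_pos hε))
    have he3 : ∀ᶠ j : ℕ in atTop, n 1 + n 0 ≤ n (j + 1) := by
      filter_upwards [eventually_ge_atTop (n 1 + n 0)] with j hj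
      have := hn (j + 1)
      omega
    obtain ⟨J, ⟨h1, h2⟩, h3⟩ := ((he1.and he2).and he3).exists
    have hnJ := hn J
    refine ⟨n J + (n (J + 1) - (n 1 + n 0)), by omega, ?_⟩
    refine ⟨fun i => if i < n J then zIter f ((i : ℤ) - (n 0 : ℤ)) z'
      else zIter f ((i : ℤ) - (n J + (n (J + 1) - (n 1 + n 0)) : ℕ) - (n 0 : ℤ)) z', ?_, ?_, ?_⟩
    · simp only []
      rw [if_pos (show 0 < n J by omega)]
      norm_num
    · simp only []
      rw [if_neg (show ¬(n J + (n (J + 1) - (n 1 + n 0)) < n J) by omega)]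
      congr 1
      push_cast [h3]
      ring
    · intro i hi
      simp only []
      by_cases h5 : i + 1 < n J
      · rw [if_pos (by omega), if_pos h5, f_zIter]
        have he : (i : ℤ) - (n 0 : ℤ) + 1 = ((i + 1 : ℕ) : ℤ) - (n 0 : ℤ) := by push_cast; ring
        rw [he, dist_self]
        exact hε
      · by_cases h6 : i + 1 = n J
        · rw [if_pos (by omega), if_neg (by omega), f_zIter]
          have e1 : (i : ℤ) - (n 0 : ℤ) + 1 = (n J : ℤ) - (n 0 : ℤ) := by omega
          have e2 : ((i + 1 : ℕ) : ℤ) - ((n J + (n (J + 1) - (n 1 + n 0)) : ℕ) : ℤ)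
              - (n 0 : ℤ) = (n 1 : ℤ) - (n (J + 1) : ℤ) := by omega
          rw [e1, e2]
          calc dist (zIter f ((n J : ℤ) - (n 0 : ℤ)) z')
                (zIter f ((n 1 : ℤ) - (n (J + 1) : ℤ)) z')
              ≤ dist (zIter f ((n J : ℤ) - (n 0 : ℤ)) z') p
                + dist (zIter f ((n 1 : ℤ) - (n (J + 1) : ℤ)) z') p := dist_triangle_right _ _ _
            _ < ε / 2 + ε / 2 := add_lt_add h1 h2
            _ = ε := add_halves ε
        · rw [if_neg (by omega), if_neg (by omega), f_zIter]
          have he : (i : ℤ) - ((n J + (n (J + 1) - (n 1 + n 0)) : ℕ) : ℤ) - (n 0 : ℤ) + 1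
              = ((i + 1 : ℕ) : ℤ) - ((n J + (n (J + 1) - (n 1 + n 0)) : ℕ) : ℤ) - (n 0 : ℤ) := by
            push_cast; ring
          rw [he, dist_self]
          exact hε
  · -- stable set
    show Tendsto (fun k : ℕ => dist (f^[k] z) (f^[k] (zIter f (-(n 0 : ℤ)) z'))) atTop (nhds 0)
    have hmap2 : Tendsto (fun k : ℕ => (k : ℤ) - (n 0 : ℤ)) atTop cofinite := by
      have h1 := tendsto_atTop_add_const_right atTop (-(n 0 : ℤ))
        (tendsto_natCast_atTop_atTop (R := ℤ))
      rw [Int.cofinite_eq]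
      exact Tendsto.mono_right (h1.congr fun k => by ring) le_sup_right
    refine Tendsto.congr' ?_ (hz2.comp hmap2)
    filter_upwards [eventually_ge_atTop (n 0)] with k hk
    have hxv : x ((k : ℤ) - (n 0 : ℤ)) = f^[k] z := by
      rw [hcoe _ (by omega), sub_add_cancel, zIter_natCast]
    have hwv : f^[k] (zIter f (-(n 0 : ℤ)) z') = zIter f ((k : ℤ) - (n 0 : ℤ)) z' := by
      rw [← zIter_natCast f k, zIter_add, sub_eq_add_neg]
    simp only [Function.comp_apply]
    rw [hxv, hwv, dist_comm]
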